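/- Extension of local-strategy solutions to complete solutions: Let φ be an LTL formula over V with decomposition ⟨φ_1,…,φ_n⟩, G = ⟨g_1,…,g_n⟩ a vector of guarantee transition systems, G_i = {g_j | j ≠ i}, and S = ⟨s_1,…,s_n⟩ a vector such that each s_i is a local strategy w.r.t. G_i. If (S,G) is a solution of certifying synthesis with local strategies for φ, then (S',G) is a solution of certifying synthesis with local satisfaction for φ, where S' = ⟨s'_1,…,s'_n⟩ with s'_i the extension of s_i w.r.t. G. -/

import Mathlib

namespace CertSynth

/-- Syntax of LTL formulas over atomic propositions `V`. -/
inductive LTL (V : Type) : Type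
  | atom : V → LTL V
  | neg : LTL V → LTL V
  | disj : LTL V → LTL V → LTL V
  | conj : LTL V → LTL V → LTL V
  | next : LTL V → LTL V
  | untl : LTL V → LTL V → LTL V

namespace LTL

variable {V : Type}

/-- Standard semantics of LTL over infinite words in `(2^V)^ω`. -/
def sat : (ℕ → Set V) → LTL V → Prop
  | σ, atom a => a ∈ σ 0
  | σ, neg φ => ¬ sat σ φ
  | σ, disj φ ψ => sat σ φ ∨ sat σ ψ
  | σ, conj φ ψ => sat σ φ ∧ sat σ ψ
  | σ, next φ => sat (fun k => σ (k + 1)) φ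
  | σ, untl φ ψ => ∃ t, sat (fun k => σ (k + t)) ψ ∧ ∀ u < t, sat (fun k => σ (k + u)) φ

/-- The atomic propositions occurring in a formula. -/
def props : LTL V → Set V
  | atom a => {a}
  | neg φ => props φ
  | disj φ ψ => props φ ∪ props ψ
  | conj φ ψ => props φ ∪ props ψ
  | next φ => props φ
  | untl φ ψ => props φ ∪ props ψ

end LTL

/-- A Moore transition system over inputs `I` and outputs `O`: a finite state set,
an initial state, a (total) transition function reading letters in `2^I` and a
labeling function producing letters in `2^O`. -/
structure Moore (V : Type) (I O : Set V) where
  S : Type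
  finS : Finite S
  init : S
  trans : S → Set V → S
  label : S → Set V
  label_sub : ∀ t, label t ⊆ O

namespace Moore

variable {V : Type} {I O : Set V}

/-- The run of a Moore transition system on an input sequence. -/
def run (m : Moore V I O) (γ : ℕ → Set V) : ℕ → m.S
  | 0 => m.init
  | k + 1 => m.trans (run m γ k) (γ k ∩ I)

/-- The computation `comp(m,γ)` of `m` on the input sequence `γ`: its `k`-th letter
is the `k`-th input letter joined with the label of the `k`-th state of the run. -/
def comp (m : Moore V I O) (γ : ℕ → Set V) (k : ℕ) : Set V :=
  (γ k ∩ I) ∪ m.label (m.run γ k)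

end Moore

/-- Simulation `T₂ ≼_{O₁} T₁` of Moore transition systems over the same inputs `I`. -/
def Sim {V : Type} {I O₁ O₂ : Set V} (T₂ : Moore V I O₂) (T₁ : Moore V I O₁) : Prop :=
  ∃ R : T₂.S → T₁.S → Prop,
    R T₂.init T₁.init ∧
    (∀ t₂ t₁, R t₂ t₁ → T₂.label t₂ ∩ O₁ = T₁.label t₁) ∧
    (∀ t₂ t₁ a, a ⊆ I → R t₂ t₁ → R (T₂.trans t₂ a) (T₁.trans t₁ a))

/-- A Moore transition system with a partial transition function. -/
structure PMoore (V : Type) (I O : Set V) where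
  S : Type
  finS : Finite S
  init : S
  trans : S → Set V → Option S
  label : S → Set V
  label_sub : ∀ t, label t ⊆ O

namespace PMoore

variable {V : Type} {I O : Set V}

/-- The (partial) run of a partial Moore transition system on an input sequence. -/
def prun (m : PMoore V I O) (γ : ℕ → Set V) : ℕ → Option m.S
  | 0 => some m.init
  | k + 1 => (prun m γ k).bind fun st => m.trans st (γ k ∩ I)

/-- The computation of `m` on `γ` is infinite. -/
def Inf (m : PMoore V I O) (γ : ℕ → Set V) : Prop := ∀ k, (m.prun γ k).isSome

/-- The computation of `m` on `γ` (defaulting to the input letter after the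
computation has ended). -/
def compD (m : PMoore V I O) (γ : ℕ → Set V) (k : ℕ) : Set V :=
  (γ k ∩ I) ∪ (match m.prun γ k with | some st => m.label st | none => ∅)

/-- The finite or infinite word `comp(m,γ) ∪ γ'`. -/
def pcomp (m : PMoore V I O) (γ γ' : ℕ → Set V) (k : ℕ) : Option (Set V) :=
  (m.prun γ k).map fun st => (γ k ∩ I) ∪ m.label st ∪ γ' k

end PMoore

/-- Simulation of a partial Moore transition system by a complete one. -/
def PSim {V : Type} {I O₁ O₂ : Set V} (T₂ : PMoore V I O₂) (T₁ : Moore V I O₁) : Prop :=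
  ∃ R : T₂.S → T₁.S → Prop,
    R T₂.init T₁.init ∧
    (∀ t₂ t₁, R t₂ t₁ → T₂.label t₂ ∩ O₁ = T₁.label t₁) ∧
    (∀ t₂ t₁ a, a ⊆ I → R t₂ t₁ → ∀ t₂', T₂.trans t₂ a = some t₂' → R t₂' (T₁.trans t₁ a))

/-- A distributed architecture with `n ≥ 2` system processes over the finite set `V`
of variables: input and output variables for every system process, output variables
of the environment, with the required disjointness conditions, `V = ⋃ᵢ Vᵢ`, and
`inp ∖ out = O_env`. -/
structure Arch (V : Type) (n : ℕ) where
  I : Fin n → Set V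
  O : Fin n → Set V
  Oenv : Set V
  two_le : 2 ≤ n
  disj_IO : ∀ i, Disjoint (I i) (O i)
  disj_O : ∀ i j, i ≠ j → Disjoint (O i) (O j)
  disj_Oenv : ∀ i, Disjoint Oenv (O i)
  cover : ∀ v : V, ∃ i, v ∈ I i ∪ O i
  env_eq : (⋃ i, I i) \ (⋃ i, O i) = Oenv

namespace Arch

variable {V : Type} {n : ℕ}

/-- The variables `Vᵢ = Iᵢ ∪ Oᵢ` of process `i`. -/
def Vars (A : Arch V n) (i : Fin n) : Set V := A.I i ∪ A.O i

/-- `inp`, the union of the inputs of all system processes. -/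
def inp (A : Arch V n) : Set V := ⋃ i, A.I i

/-- `out`, the union of the outputs of all system processes. -/
def out (A : Arch V n) : Set V := ⋃ i, A.O i

/-- The guarantee output variables `OGᵢ = Oᵢ ∩ inp` of process `i`. -/
def Og (A : Arch V n) (i : Fin n) : Set V := A.O i ∩ A.inp

end Arch

section Defs

variable {V : Type} {n : ℕ}

/-- A strategy for system process `i`: a Moore TS over `Iᵢ` and `Oᵢ`. -/
abbrev Strategy (A : Arch V n) (i : Fin n) := Moore V (A.I i) (A.O i)

/-- A guarantee transition system (GTS) for process `i`: a Moore TS over `Iᵢ` and `OGᵢ`. -/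
abbrev GTS (A : Arch V n) (i : Fin n) := Moore V (A.I i) (A.Og i)

/-- A (candidate) local strategy for process `i`: a partial Moore TS over `Iᵢ` and `Oᵢ`. -/
abbrev LocalStrategy (A : Arch V n) (i : Fin n) := PMoore V (A.I i) (A.O i)

/-- The parallel composition `s₁ ∥ … ∥ sₙ`: product state space, componentwise
transitions where each component receives the environment inputs together with the
outputs of the other components, and the union of the labelings as labels. -/
def par (A : Arch V n) (s : ∀ i, Strategy A i) : Moore V A.Oenv A.out where
  S := ∀ i, (s i).S
  finS := by
    haveI : ∀ i, Finite ((s i).S) := fun i => (s i).finS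
    infer_instance
  init := fun i => (s i).init
  trans := fun st a i => (s i).trans (st i) ((a ∪ ⋃ j, (s j).label (st j)) ∩ A.I i)
  label := fun st => ⋃ i, (s i).label (st i)
  label_sub := fun st => Set.iUnion_mono fun i => (s i).label_sub (st i)

open Classical in
/-- The parallel composition of partial Moore transition systems. -/
noncomputable def pPar (A : Arch V n) (s : ∀ i, LocalStrategy A i) :
    PMoore V A.Oenv A.out where
  S := ∀ i, (s i).S
  finS := by
    haveI : ∀ i, Finite ((s i).S) := fun i => (s i).finS
    infer_instance
  init := fun i => (s i).init
  trans := fun st a =>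
    if h : ∀ i, ((s i).trans (st i) ((a ∪ ⋃ j, (s j).label (st j)) ∩ A.I i)).isSome then
      some fun i => ((s i).trans (st i) ((a ∪ ⋃ j, (s j).label (st j)) ∩ A.I i)).get (h i)
    else none
  label := fun st => ⋃ i, (s i).label (st i)
  label_sub := fun st => Set.iUnion_mono fun i => (s i).label_sub (st i)

/-- `σ ⊨ Φ` for a specification `Φ = ξ₁ ∧ … ∧ ξₖ` given by its list of conjuncts. -/
def satSpec (Φ : List (LTL V)) (σ : ℕ → Set V) : Prop := ∀ ξ ∈ Φ, LTL.sat σ ξ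

/-- `ξ` is a conjunct of the subspecification `φᵢ` of the decomposition of `Φ`:
it is a conjunct of `Φ` that mentions an output of `pᵢ` or no output at all. -/
def inDecomp (A : Arch V n) (Φ : List (LTL V)) (i : Fin n) (ξ : LTL V) : Prop :=
  ξ ∈ Φ ∧ ((ξ.props ∩ A.O i).Nonempty ∨ ξ.props ∩ A.out = ∅)

/-- `σ ⊨ φᵢ`, where `φᵢ` is the `i`-th subspecification of the decomposition of `Φ`. -/
def satDecomp (A : Arch V n) (Φ : List (LTL V)) (i : Fin n) (σ : ℕ → Set V) : Prop :=
  ∀ ξ, inDecomp A Φ i ξ → LTL.sat σ ξ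

/-- The atomic propositions `prop(φᵢ)` of the `i`-th subspecification. -/
def propsDecomp (A : Arch V n) (Φ : List (LTL V)) (i : Fin n) : Set V :=
  {v | ∃ ξ, inDecomp A Φ i ξ ∧ v ∈ ξ.props}

/-- The relevant processes `Rᵢ = { pⱼ | j ≠ i, Oⱼ ∩ prop(φᵢ) ≠ ∅ }` of process `i`. -/
def Rel (A : Arch V n) (Φ : List (LTL V)) (i : Fin n) : Set (Fin n) :=
  {j | j ≠ i ∧ (A.O j ∩ propsDecomp A Φ i).Nonempty}

/-- The word `comp(sᵢ,γ) ∪ γ'`. -/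
def cword (A : Arch V n) {i : Fin n} (s : Strategy A i) (γ γ' : ℕ → Set V) : ℕ → Set V :=
  fun k => s.comp γ k ∪ γ' k

/-- `sᵢ ⊨ ψ`: every computation of `sᵢ`, joined with arbitrary valuations of the
variables outside `Vᵢ`, satisfies `ψ`. -/
def StratSat (A : Arch V n) {i : Fin n} (s : Strategy A i) (ψ : LTL V) : Prop :=
  ∀ γ γ' : ℕ → Set V, (∀ k, γ k ⊆ A.I i) → (∀ k, γ' k ⊆ (A.Vars i)ᶜ) →
    LTL.sat (cword A s γ γ') ψ

/-- `(S,Ψ)` is a solution of certifying synthesis with LTL certificates for `Φ`,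
where process `i` uses the certificates of the processes in `J i`:
`sᵢ ⊨ ψᵢ ∧ (⋀_{j ∈ J i} ψⱼ → φᵢ)` for every system process `i`. -/
def CertSolLTLWith (A : Arch V n) (Φ : List (LTL V)) (s : ∀ i, Strategy A i)
    (ψ : Fin n → LTL V) (J : Fin n → Set (Fin n)) : Prop :=
  ∀ i, ∀ γ γ' : ℕ → Set V, (∀ k, γ k ⊆ A.I i) → (∀ k, γ' k ⊆ (A.Vars i)ᶜ) →
    LTL.sat (cword A (s i) γ γ') (ψ i) ∧
      ((∀ j ∈ J i, LTL.sat (cword A (s i) γ γ') (ψ j)) →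
        satDecomp A Φ i (cword A (s i) γ γ'))

/-- `(S,Ψ)` is a solution of certifying synthesis with LTL certificates for `Φ`. -/
def CertSolLTL (A : Arch V n) (Φ : List (LTL V)) (s : ∀ i, Strategy A i)
    (ψ : Fin n → LTL V) : Prop :=
  CertSolLTLWith A Φ s ψ (fun i => {j | j ≠ i})

/-- `(S,Ψ)_R` is a solution of certifying synthesis with relevant processes for `Φ`. -/
def CertSolLTLR (A : Arch V n) (Φ : List (LTL V)) (s : ∀ i, Strategy A i)
    (ψ : Fin n → LTL V) : Prop :=
  CertSolLTLWith A Φ s ψ (fun i => Rel A Φ i)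

/-- The first `t` letters of `σ` form a valid history w.r.t. the GTSs `{g j | j ∈ J}`:
for every `j ∈ J`, every position `k < t` and every infinite extension of the
length-`t` prefix of `σ`, the letters agree on `OGⱼ` with the computation of `g j`. -/
def ValidHist (A : Arch V n) (g : ∀ j, GTS A j) (J : Set (Fin n)) (t : ℕ)
    (σ : ℕ → Set V) : Prop :=
  ∀ j ∈ J, ∀ k < t, ∀ σh : ℕ → Set V, (∀ l < t, σh l = σ l) →
    σ k ∩ A.Og j = (g j).comp σh k ∩ A.Og j

/-- `sᵢ` locally satisfies `φᵢ` w.r.t. the GTSs of the processes in `J`. -/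
def LocalSat (A : Arch V n) (Φ : List (LTL V)) {i : Fin n} (s : Strategy A i)
    (g : ∀ j, GTS A j) (J : Set (Fin n)) : Prop :=
  ∀ γ γ' : ℕ → Set V, (∀ k, γ k ⊆ A.I i) → (∀ k, γ' k ⊆ (A.Vars i)ᶜ) →
    (∀ t, ValidHist A g J t (cword A s γ γ')) →
    satDecomp A Φ i (cword A s γ γ')

/-- `(S,G)` is a solution of certifying synthesis with guarantee transition systems,
where process `i` uses the guarantees of the processes in `J i`. -/
def CertSolGTSWith (A : Arch V n) (Φ : List (LTL V)) (s : ∀ i, Strategy A i)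
    (g : ∀ i, GTS A i) (J : Fin n → Set (Fin n)) : Prop :=
  ∀ i, Sim (s i) (g i) ∧ LocalSat A Φ (s i) g (J i)

/-- `(S,G)` is a solution of certifying synthesis with guarantee transition systems
(equivalently, with local satisfaction) for `Φ`. -/
def CertSolGTS (A : Arch V n) (Φ : List (LTL V)) (s : ∀ i, Strategy A i)
    (g : ∀ i, GTS A i) : Prop :=
  CertSolGTSWith A Φ s g (fun i => {j | j ≠ i})

/-- `(S,G)_R` is a solution of certifying synthesis with relevant processes for `Φ`. -/
def CertSolGTSR (A : Arch V n) (Φ : List (LTL V)) (s : ∀ i, Strategy A i)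
    (g : ∀ i, GTS A i) : Prop :=
  CertSolGTSWith A Φ s g (fun i => Rel A Φ i)

/-- The copy of the strategy `s` whose labels are restricted to the guarantee
output variables `OGᵢ`. -/
def toGTS (A : Arch V n) {i : Fin n} (s : Strategy A i) : GTS A i where
  S := s.S
  finS := s.finS
  init := s.init
  trans := s.trans
  label := fun t => s.label t ∩ A.Og i
  label_sub := fun _ => Set.inter_subset_right

/-- `s₁ ∥ … ∥ sₙ ⊨ Φ`. -/
def ParSat (A : Arch V n) (s : ∀ i, Strategy A i) (Φ : List (LTL V)) : Prop :=
  ∀ γ γ' : ℕ → Set V, (∀ k, γ k ⊆ A.Oenv) → (∀ k, γ' k ⊆ (A.Oenv ∪ A.out)ᶜ) →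
    satSpec Φ (fun k => (par A s).comp γ k ∪ γ' k)

/-- A universal co-Büchi automaton over the alphabet `2^V`. -/
structure UCB (V : Type) where
  Q : Type
  finQ : Finite Q
  init : Q
  δ : Q → Set V → Q → Prop
  F : Set Q

/-- The word `σ` is accepted by the universal co-Büchi automaton `Aut`:
every run of `σ` visits rejecting states only finitely often. -/
def UCB.accepts (Aut : UCB V) (σ : ℕ → Set V) : Prop :=
  ∀ r : ℕ → Aut.Q, r 0 = Aut.init → (∀ k, Aut.δ (r k) (σ k) (r (k + 1))) →
    {k | r k ∈ Aut.F}.Finite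

/-- Every (finite or infinite) run of `Aut` induced by the possibly finite word `w`
contains only finitely many visits to rejecting states. -/
def UCB.RunsOk (Aut : UCB V) (w : ℕ → Option (Set V)) : Prop :=
  ∀ r : ℕ → Aut.Q, r 0 = Aut.init →
    (∀ k a, w k = some a → Aut.δ (r k) a (r (k + 1))) →
    {k | r k ∈ Aut.F ∧ ∀ l < k, (w l).isSome}.Finite

/-- `s` is a local strategy for process `i` w.r.t. the GTSs `{g j | j ∈ J}`:
its computation on `γ` is infinite iff some valuation `γ'` of the remaining
variables makes all prefixes of `comp(s,γ) ∪ γ'` valid histories. -/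
def IsLocalStrategy (A : Arch V n) {i : Fin n} (g : ∀ j, GTS A j) (J : Set (Fin n))
    (s : LocalStrategy A i) : Prop :=
  ∀ γ : ℕ → Set V, (∀ k, γ k ⊆ A.I i) →
    (s.Inf γ ↔ ∃ γ' : ℕ → Set V, (∀ k, γ' k ⊆ (A.Vars i)ᶜ) ∧
      ∀ t, ValidHist A g J t (fun k => s.compD γ k ∪ γ' k))

/-- `(S,G)` is a solution of certifying synthesis with local strategies for `Φ`:
for every system process `i`, `sᵢ ≼_{OGᵢ} gᵢ` and, for every universal co-Büchi
automaton with `L(Aᵢ) = L(φᵢ)`, all runs induced by `comp(sᵢ,γ) ∪ γ'` contain only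
finitely many visits to rejecting states. -/
def CertSolLocal (A : Arch V n) (Φ : List (LTL V)) (s : ∀ i, LocalStrategy A i)
    (g : ∀ i, GTS A i) : Prop :=
  ∀ i, PSim (s i) (g i) ∧
    ∀ Aut : UCB V, (∀ σ : ℕ → Set V, Aut.accepts σ ↔ satDecomp A Φ i σ) →
      ∀ γ γ' : ℕ → Set V, (∀ k, γ k ⊆ A.I i) → (∀ k, γ' k ⊆ (A.Vars i)ᶜ) →
        Aut.RunsOk ((s i).pcomp γ γ')

/-- `s'` is the extension of the local strategy `s` w.r.t. `G`: it behaves like `s`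
on inputs with infinite computation and like the own guarantee `gᵢ` (joined with some
valuation of the non-guarantee outputs) otherwise. -/
def IsExtension (A : Arch V n) {i : Fin n} (s : LocalStrategy A i) (gi : GTS A i)
    (s' : Strategy A i) : Prop :=
  ∀ γ : ℕ → Set V, (∀ k, γ k ⊆ A.I i) →
    (s.Inf γ → ∀ k, s'.comp γ k = s.compD γ k) ∧
    (¬ s.Inf γ → ∃ σ' : ℕ → Set V, (∀ k, σ' k ⊆ A.O i \ A.Og i) ∧
      ∀ k, s'.comp γ k = gi.comp γ k ∪ σ' k)

/-- `s'` is the restriction of the complete strategy `s` to a local strategy w.r.t.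
the GTSs `{g j | j ∈ J}`: a copy of `s` whose computation on `γ` is infinite iff some
valuation `γ'` of the remaining variables makes all prefixes of `comp(s,γ) ∪ γ'`
valid histories. -/
def IsRestriction (A : Arch V n) {i : Fin n} (g : ∀ j, GTS A j) (J : Set (Fin n))
    (s : Strategy A i) (s' : LocalStrategy A i) : Prop :=
  ∀ γ : ℕ → Set V, (∀ k, γ k ⊆ A.I i) →
    (∀ k, (s'.prun γ k).isSome → s'.compD γ k = s.comp γ k) ∧
    (s'.Inf γ ↔ ∃ γ' : ℕ → Set V, (∀ k, γ' k ⊆ (A.Vars i)ᶜ) ∧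
      ∀ t, ValidHist A g J t (cword A s γ γ'))

/-- `s₁ ∥ … ∥ sₙ ⊨ Φ` for local strategies: all computations of the parallel
composition are infinite and satisfy `Φ`. -/
def PParSat (A : Arch V n) (s : ∀ i, LocalStrategy A i) (Φ : List (LTL V)) : Prop :=
  ∀ γ γ' : ℕ → Set V, (∀ k, γ k ⊆ A.Oenv) → (∀ k, γ' k ⊆ (A.Oenv ∪ A.out)ᶜ) →
    (pPar A s).Inf γ ∧ satSpec Φ (fun k => (pPar A s).compD γ k ∪ γ' k)

end Defs

section AutomatonConstruction

variable {V : Type}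

namespace LTL

/-- The list of subformulas of a formula (including itself). -/
def subf : LTL V → List (LTL V)
  | atom a => [atom a]
  | neg φ => neg φ :: subf φ
  | disj φ ψ => disj φ ψ :: (subf φ ++ subf ψ)
  | conj φ ψ => conj φ ψ :: (subf φ ++ subf ψ)
  | next φ => next φ :: subf φ
  | untl φ ψ => untl φ ψ :: (subf φ ++ subf ψ)

lemma mem_subf_self (φ : LTL V) : φ ∈ subf φ := by
  cases φ <;> simp [subf]

lemma subf_closed : ∀ {χ ψ : LTL V}, ψ ∈ subf χ → subf ψ ⊆ subf χ := by
  intro χ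
  induction χ with
  | atom a =>
    intro ψ h; simp [subf] at h; subst h; exact fun x hx => hx
  | neg φ ih =>
    intro ψ h; simp [subf] at h
    rcases h with h | h
    · subst h; exact fun x hx => hx
    · exact fun x hx => List.mem_cons_of_mem _ (ih h hx)
  | disj φ₁ φ₂ ih1 ih2 =>
    intro ψ h; simp [subf] at h
    rcases h with h | h | h
    · subst h; exact fun x hx => hx
    · exact fun x hx => List.mem_cons_of_mem _ (List.mem_append.mpr (Or.inl (ih1 h hx)))
    · exact fun x hx => List.mem_cons_of_mem _ (List.mem_append.mpr (Or.inr (ih2 h hx)))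
  | conj φ₁ φ₂ ih1 ih2 =>
    intro ψ h; simp [subf] at h
    rcases h with h | h | h
    · subst h; exact fun x hx => hx
    · exact fun x hx => List.mem_cons_of_mem _ (List.mem_append.mpr (Or.inl (ih1 h hx)))
    · exact fun x hx => List.mem_cons_of_mem _ (List.mem_append.mpr (Or.inr (ih2 h hx)))
  | next φ ih =>
    intro ψ h; simp [subf] at h
    rcases h with h | h
    · subst h; exact fun x hx => hx
    · exact fun x hx => List.mem_cons_of_mem _ (ih h hx)
  | untl φ₁ φ₂ ih1 ih2 =>
    intro ψ h; simp [subf] at h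
    rcases h with h | h | h
    · subst h; exact fun x hx => hx
    · exact fun x hx => List.mem_cons_of_mem _ (List.mem_append.mpr (Or.inl (ih1 h hx)))
    · exact fun x hx => List.mem_cons_of_mem _ (List.mem_append.mpr (Or.inr (ih2 h hx)))

lemma mem_subf_neg {χ φ : LTL V} (h : neg φ ∈ subf χ) : φ ∈ subf χ :=
  subf_closed h (by simp [subf]; exact Or.inr (mem_subf_self φ))

lemma mem_subf_next {χ φ : LTL V} (h : next φ ∈ subf χ) : φ ∈ subf χ :=
  subf_closed h (by simp [subf]; exact Or.inr (mem_subf_self φ))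

lemma mem_subf_disj_left {χ φ ψ : LTL V} (h : disj φ ψ ∈ subf χ) : φ ∈ subf χ :=
  subf_closed h (by simp [subf]; exact Or.inr (Or.inl (mem_subf_self φ)))

lemma mem_subf_disj_right {χ φ ψ : LTL V} (h : disj φ ψ ∈ subf χ) : ψ ∈ subf χ :=
  subf_closed h (by simp [subf]; exact Or.inr (Or.inr (mem_subf_self ψ)))

lemma mem_subf_conj_left {χ φ ψ : LTL V} (h : conj φ ψ ∈ subf χ) : φ ∈ subf χ :=
  subf_closed h (by simp [subf]; exact Or.inr (Or.inl (mem_subf_self φ)))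

lemma mem_subf_conj_right {χ φ ψ : LTL V} (h : conj φ ψ ∈ subf χ) : ψ ∈ subf χ :=
  subf_closed h (by simp [subf]; exact Or.inr (Or.inr (mem_subf_self ψ)))

lemma mem_subf_untl_left {χ φ ψ : LTL V} (h : untl φ ψ ∈ subf χ) : φ ∈ subf χ :=
  subf_closed h (by simp [subf]; exact Or.inr (Or.inl (mem_subf_self φ)))

lemma mem_subf_untl_right {χ φ ψ : LTL V} (h : untl φ ψ ∈ subf χ) : ψ ∈ subf χ :=
  subf_closed h (by simp [subf]; exact Or.inr (Or.inr (mem_subf_self ψ)))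

/-- Suffix of an infinite word. -/
def sfx (σ : ℕ → Set V) (t : ℕ) : ℕ → Set V := fun k => σ (k + t)

lemma sat_untl_iff (σ : ℕ → Set V) (φ ψ : LTL V) :
    sat σ (untl φ ψ) ↔ sat σ ψ ∨ (sat σ φ ∧ sat (sfx σ 1) (untl φ ψ)) := by
  constructor
  · rintro ⟨t, h2, h1⟩
    cases t with
    | zero => left; simpa using h2
    | succ t =>
      right
      refine ⟨by simpa using h1 0 (Nat.succ_pos t), ⟨t, ?_, ?_⟩⟩
      · have heq : (fun k => sfx σ 1 (k + t)) = fun k => σ (k + (t + 1)) := by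
          funext k; exact congrArg σ (by omega)
        rw [show sat (fun k => sfx σ 1 (k + t)) ψ = sat (fun k => σ (k + (t+1))) ψ from
          congrArg (fun τ => sat τ ψ) heq]
        exact h2
      · intro u hu
        have heq : (fun k => sfx σ 1 (k + u)) = fun k => σ (k + (u + 1)) := by
          funext k; exact congrArg σ (by omega)
        rw [show sat (fun k => sfx σ 1 (k + u)) φ = sat (fun k => σ (k + (u+1))) φ from
          congrArg (fun τ => sat τ φ) heq]
        exact h1 (u+1) (by omega)
  · rintro (h | ⟨hφ, t, h2, h1⟩)
    · exact ⟨0, by simpa using h, fun u hu => absurd hu (Nat.not_lt_zero u)⟩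
    · refine ⟨t+1, ?_, ?_⟩
      · have heq : (fun k => σ (k + (t + 1))) = fun k => sfx σ 1 (k + t) := by
          funext k; exact congrArg σ (by omega)
        rw [show sat (fun k => σ (k + (t+1))) ψ = sat (fun k => sfx σ 1 (k + t)) ψ from
          congrArg (fun τ => sat τ ψ) heq]
        exact h2
      · intro u hu
        cases u with
        | zero => simpa using hφ
        | succ u =>
          have heq : (fun k => σ (k + (u + 1))) = fun k => sfx σ 1 (k + u) := by
            funext k; exact congrArg σ (by omega)
          rw [show sat (fun k => σ (k + (u+1))) φ = sat (fun k => sfx σ 1 (k + u)) φ from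
            congrArg (fun τ => sat τ φ) heq]
          exact h1 u (by omega)

end LTL

end AutomatonConstruction


section AutomatonStates

variable {V : Type}

/-- The subformulas of `χ`, as a (finite) type. -/
abbrev SubfT (χ : LTL V) : Type := {ψ : LTL V // ψ ∈ LTL.subf χ}

instance (χ : LTL V) : Finite (SubfT χ) := (LTL.subf χ).finite_toSet.to_subtype

/-- The set of subformulas of `χ` satisfied by `σ`. -/
def sv (χ : LTL V) (σ : ℕ → Set V) : Set (SubfT χ) := {ψ | LTL.sat σ ψ.1}

/-- One-step local consistency of assignments. -/
def consA (χ : LTL V) (v : Set (SubfT χ)) (a : Set V) (v' : Set (SubfT χ)) : Prop :=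
  (∀ p (h : LTL.atom p ∈ LTL.subf χ), (⟨_, h⟩ ∈ v ↔ p ∈ a)) ∧
  (∀ φ (h : LTL.neg φ ∈ LTL.subf χ) (hφ : φ ∈ LTL.subf χ),
      (⟨_, h⟩ ∈ v ↔ ¬ (⟨φ, hφ⟩ ∈ v))) ∧
  (∀ φ ψ (h : LTL.disj φ ψ ∈ LTL.subf χ) (h1 : φ ∈ LTL.subf χ) (h2 : ψ ∈ LTL.subf χ),
      (⟨_, h⟩ ∈ v ↔ (⟨φ, h1⟩ ∈ v ∨ ⟨ψ, h2⟩ ∈ v))) ∧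
  (∀ φ ψ (h : LTL.conj φ ψ ∈ LTL.subf χ) (h1 : φ ∈ LTL.subf χ) (h2 : ψ ∈ LTL.subf χ),
      (⟨_, h⟩ ∈ v ↔ (⟨φ, h1⟩ ∈ v ∧ ⟨ψ, h2⟩ ∈ v))) ∧
  (∀ φ (h : LTL.next φ ∈ LTL.subf χ) (hφ : φ ∈ LTL.subf χ),
      (⟨_, h⟩ ∈ v ↔ ⟨φ, hφ⟩ ∈ v')) ∧
  (∀ φ ψ (h : LTL.untl φ ψ ∈ LTL.subf χ) (h1 : φ ∈ LTL.subf χ) (h2 : ψ ∈ LTL.subf χ),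
      (⟨_, h⟩ ∈ v ↔ (⟨ψ, h2⟩ ∈ v ∨ (⟨φ, h1⟩ ∈ v ∧ ⟨_, h⟩ ∈ v'))))

lemma consA_sv (χ : LTL V) (τ : ℕ → Set V) :
    consA χ (sv χ τ) (τ 0) (sv χ (LTL.sfx τ 1)) := by
  refine ⟨?_, ?_, ?_, ?_, ?_, ?_⟩
  · intro p h; exact Iff.rfl
  · intro φ h hφ; exact Iff.rfl
  · intro φ ψ h h1 h2; exact Iff.rfl
  · intro φ ψ h h1 h2; exact Iff.rfl
  · intro φ h hφ; exact Iff.rfl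
  · intro φ ψ h h1 h2
    exact LTL.sat_untl_iff τ φ ψ

lemma consA_unique {χ : LTL V} {v w v' : Set (SubfT χ)} {a : Set V}
    (hv : consA χ v a v') (hw : consA χ w a v') : v = w := by
  obtain ⟨hA1, hN1, hD1, hC1, hX1, hU1⟩ := hv
  obtain ⟨hA2, hN2, hD2, hC2, hX2, hU2⟩ := hw
  have key : ∀ ψ (h : ψ ∈ LTL.subf χ), ((⟨ψ, h⟩ : SubfT χ) ∈ v ↔ ⟨ψ, h⟩ ∈ w) := by
    intro ψ
    induction ψ with
    | atom p => intro h; rw [hA1 p h, hA2 p h]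
    | neg φ ih =>
      intro h
      have hφ := LTL.mem_subf_neg h
      rw [hN1 φ h hφ, hN2 φ h hφ, ih hφ]
    | disj φ ψ ih1 ih2 =>
      intro h
      have h1 := LTL.mem_subf_disj_left h
      have h2 := LTL.mem_subf_disj_right h
      rw [hD1 φ ψ h h1 h2, hD2 φ ψ h h1 h2, ih1 h1, ih2 h2]
    | conj φ ψ ih1 ih2 =>
      intro h
      have h1 := LTL.mem_subf_conj_left h
      have h2 := LTL.mem_subf_conj_right h
      rw [hC1 φ ψ h h1 h2, hC2 φ ψ h h1 h2, ih1 h1, ih2 h2]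
    | next φ ih =>
      intro h
      have hφ := LTL.mem_subf_next h
      rw [hX1 φ h hφ, hX2 φ h hφ]
    | untl φ ψ ih1 ih2 =>
      intro h
      have h1 := LTL.mem_subf_untl_left h
      have h2 := LTL.mem_subf_untl_right h
      rw [hU1 φ ψ h h1 h2, hU2 φ ψ h h1 h2, ih1 h1, ih2 h2]
  ext ψ
  obtain ⟨ψ, h⟩ := ψ
  exact key ψ h

/-- A locally consistent and fair run agrees with the semantic assignments. -/
lemma fair_run_eq {χ : LTL V} (σ : ℕ → Set V) (v : ℕ → Set (SubfT χ))
    (hc : ∀ k, consA χ (v k) (σ k) (v (k+1)))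
    (hf : ∀ φ ψ (h : LTL.untl φ ψ ∈ LTL.subf χ) (h2 : ψ ∈ LTL.subf χ) (K : ℕ),
        ∃ k, K ≤ k ∧ ((⟨LTL.untl φ ψ, h⟩ : SubfT χ) ∈ v k → ⟨ψ, h2⟩ ∈ v k)) :
    ∀ ψ (h : ψ ∈ LTL.subf χ) (k : ℕ),
      ((⟨ψ, h⟩ : SubfT χ) ∈ v k ↔ LTL.sat (LTL.sfx σ k) ψ) := by
  intro ψ
  induction ψ with
  | atom p =>
    intro h k
    rw [(hc k).1 p h]
    show p ∈ σ k ↔ p ∈ σ (0 + k)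
    rw [Nat.zero_add]
  | neg φ ih =>
    intro h k
    have hφ := LTL.mem_subf_neg h
    rw [(hc k).2.1 φ h hφ, ih hφ k]
    exact Iff.rfl
  | disj φ ψ ih1 ih2 =>
    intro h k
    have h1 := LTL.mem_subf_disj_left h
    have h2 := LTL.mem_subf_disj_right h
    rw [(hc k).2.2.1 φ ψ h h1 h2, ih1 h1 k, ih2 h2 k]
    exact Iff.rfl
  | conj φ ψ ih1 ih2 =>
    intro h k
    have h1 := LTL.mem_subf_conj_left h
    have h2 := LTL.mem_subf_conj_right h
    rw [(hc k).2.2.2.1 φ ψ h h1 h2, ih1 h1 k, ih2 h2 k]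
    exact Iff.rfl
  | next φ ih =>
    intro h k
    have hφ := LTL.mem_subf_next h
    rw [(hc k).2.2.2.2.1 φ h hφ, ih hφ (k+1)]
    show LTL.sat (LTL.sfx σ (k+1)) φ ↔ LTL.sat (fun j => LTL.sfx σ k (j + 1)) φ
    have heq : (fun j => LTL.sfx σ k (j + 1)) = LTL.sfx σ (k+1) := by
      funext j; exact congrArg σ (by omega)
    rw [heq]
  | untl φ ψ₂ ihφ ihψ =>
    intro h k
    have hφm := LTL.mem_subf_untl_left h
    have hψm := LTL.mem_subf_untl_right h
    constructor
    · intro hmem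
      have hex : ∃ d, ((⟨LTL.untl φ ψ₂, h⟩ : SubfT χ) ∈ v (k+d) → ⟨ψ₂, hψm⟩ ∈ v (k+d)) := by
        obtain ⟨m, hm, himp⟩ := hf φ ψ₂ h hψm k
        refine ⟨m - k, ?_⟩
        rwa [Nat.add_sub_cancel' hm]
      classical
      have hmin : ∀ e, e < Nat.find hex →
          ((⟨LTL.untl φ ψ₂, h⟩ : SubfT χ) ∈ v (k+e) ∧ ⟨ψ₂, hψm⟩ ∉ v (k+e)) := by
        intro e he
        have := Nat.find_min hex he
        push_neg at this
        exact this
      have persist : ∀ d, d ≤ Nat.find hex →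
          ((⟨LTL.untl φ ψ₂, h⟩ : SubfT χ) ∈ v (k+d) ∧ ∀ e, e < d → ⟨φ, hφm⟩ ∈ v (k+e)) := by
        intro d
        induction d with
        | zero =>
          intro _
          exact ⟨by simpa using hmem, fun e he => absurd he (Nat.not_lt_zero e)⟩
        | succ d ihd =>
          intro hdd
          obtain ⟨hu, hphis⟩ := ihd (by omega)
          have hpend := hmin d (by omega)
          have hcl := ((hc (k+d)).2.2.2.2.2 φ ψ₂ h hφm hψm).1 hu
          rcases hcl with hψin | ⟨hφin, hunext⟩
          · exact absurd hψin hpend.2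
          · refine ⟨by exact hunext, ?_⟩
            intro e he
            rcases Nat.lt_succ_iff_lt_or_eq.mp he with he | he
            · exact hphis e he
            · subst he; exact hφin
      have hu_at := (persist (Nat.find hex) le_rfl).1
      have hψat : (⟨ψ₂, hψm⟩ : SubfT χ) ∈ v (k + Nat.find hex) := Nat.find_spec hex hu_at
      refine ⟨Nat.find hex, ?_, ?_⟩
      · have hs := (ihψ hψm (k + Nat.find hex)).1 hψat
        have heq : (fun j => LTL.sfx σ k (j + Nat.find hex)) = LTL.sfx σ (k + Nat.find hex) := by
          funext j; exact congrArg σ (by omega)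
        rw [show LTL.sat (fun j => LTL.sfx σ k (j + Nat.find hex)) ψ₂
              = LTL.sat (LTL.sfx σ (k + Nat.find hex)) ψ₂ from congrArg (fun τ => LTL.sat τ ψ₂) heq]
        exact hs
      · intro u hu
        have hs := (ihφ hφm (k + u)).1 ((persist (Nat.find hex) le_rfl).2 u hu)
        have heq : (fun j => LTL.sfx σ k (j + u)) = LTL.sfx σ (k + u) := by
          funext j; exact congrArg σ (by omega)
        rw [show LTL.sat (fun j => LTL.sfx σ k (j + u)) φ
              = LTL.sat (LTL.sfx σ (k + u)) φ from congrArg (fun τ => LTL.sat τ φ) heq]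
        exact hs
    · intro hsat
      obtain ⟨t, h2, h1⟩ := hsat
      have aux : ∀ t k, LTL.sat (LTL.sfx σ (k+t)) ψ₂ →
          (∀ u, u < t → LTL.sat (LTL.sfx σ (k+u)) φ) →
          (⟨LTL.untl φ ψ₂, h⟩ : SubfT χ) ∈ v k := by
        intro t
        induction t with
        | zero =>
          intro k h2 _
          have hψ : (⟨ψ₂, hψm⟩ : SubfT χ) ∈ v k := (ihψ hψm k).2 (by simpa using h2)
          exact ((hc k).2.2.2.2.2 φ ψ₂ h hφm hψm).2 (Or.inl hψ)
        | succ t iht =>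
          intro k h2 h1
          have hnext : (⟨LTL.untl φ ψ₂, h⟩ : SubfT χ) ∈ v (k+1) := by
            apply iht (k+1)
            · rw [show k + 1 + t = k + (t+1) from by omega]; exact h2
            · intro u hu
              rw [show k + 1 + u = k + (u+1) from by omega]
              exact h1 (u+1) (by omega)
          have hφk : (⟨φ, hφm⟩ : SubfT χ) ∈ v k := (ihφ hφm k).2 (by simpa using h1 0 (Nat.succ_pos t))
          exact ((hc k).2.2.2.2.2 φ ψ₂ h hφm hψm).2 (Or.inr ⟨hφk, hnext⟩)
      apply aux t k
      · have heq : (fun j => LTL.sfx σ k (j + t)) = LTL.sfx σ (k+t) := by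
          funext j; exact congrArg σ (by omega)
        rw [show LTL.sat (LTL.sfx σ (k+t)) ψ₂ = LTL.sat (fun j => LTL.sfx σ k (j + t)) ψ₂ from
          (congrArg (fun τ => LTL.sat τ ψ₂) heq).symm]
        exact h2
      · intro u hu
        have heq : (fun j => LTL.sfx σ k (j + u)) = LTL.sfx σ (k+u) := by
          funext j; exact congrArg σ (by omega)
        rw [show LTL.sat (LTL.sfx σ (k+u)) φ = LTL.sat (fun j => LTL.sfx σ k (j + u)) φ from
          (congrArg (fun τ => LTL.sat τ φ) heq).symm]
        exact h1 u hu

end AutomatonStates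


section AutomatonDef

variable {V : Type}

/-- The pending (unfulfilled) until-obligations of an assignment. -/
def pend (χ : LTL V) (v : Set (SubfT χ)) : Set (SubfT χ) :=
  {u | u ∈ v ∧ ∃ φ, ∃ ψ, ∃ h2 : ψ ∈ LTL.subf χ, u.1 = LTL.untl φ ψ ∧ (⟨ψ, h2⟩ : SubfT χ) ∉ v}

open Classical in
/-- The breakpoint sequence of obligation sets along a run. -/
noncomputable def mkP (χ : LTL V) (vs : ℕ → Set (SubfT χ)) : ℕ → Set (SubfT χ)
  | 0 => ∅
  | k+1 => if mkP χ vs k = ∅ then pend χ (vs (k+1)) else mkP χ vs k ∩ pend χ (vs (k+1))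

instance finiteOption {α : Type} [Finite α] : Finite (Option α) := by
  cases nonempty_fintype α
  infer_instance

open Classical in
/-- A universal co-Büchi automaton for the language of `χ`. -/
noncomputable def aut (χ : LTL V) : UCB V where
  Q := Option (Set (SubfT χ) × Set (SubfT χ))
  finQ := by infer_instance
  init := none
  δ := fun q a q' =>
    match q, q' with
    | _, none => False
    | none, some (v', P') =>
        ∃ v, consA χ v a v' ∧ (⟨χ, LTL.mem_subf_self χ⟩ : SubfT χ) ∉ v ∧ P' = pend χ v'
    | some (v, P), some (v', P') =>
        consA χ v a v' ∧ P' = if P = ∅ then pend χ v' else P ∩ pend χ v'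
  F := {q | ∃ v, q = some (v, (∅ : Set (SubfT χ)))}

lemma aut_accepts_iff (χ : LTL V) (σ : ℕ → Set V) :
    (aut χ).accepts σ ↔ LTL.sat σ χ := by
  classical
  have hconsσ : ∀ (τ : ℕ → Set V) k, consA χ (sv χ (LTL.sfx τ k)) (τ k) (sv χ (LTL.sfx τ (k+1))) := by
    intro τ k
    have h := consA_sv χ (LTL.sfx τ k)
    have e1 : LTL.sfx τ k 0 = τ k := by show τ (0+k) = τ k; rw [Nat.zero_add]
    have e2 : LTL.sfx (LTL.sfx τ k) 1 = LTL.sfx τ (k+1) := by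
      funext j; exact congrArg τ (by omega)
    rw [e1, e2] at h
    exact h
  constructor
  · -- accepts → sat
    intro hacc
    by_contra hns
    let vs : ℕ → Set (SubfT χ) := fun k => sv χ (LTL.sfx σ k)
    let r : ℕ → (aut χ).Q := fun k => Nat.casesOn k none (fun m => some (vs (m+1), mkP χ vs (m+1)))
    have hδ : ∀ k, (aut χ).δ (r k) (σ k) (r (k+1)) := by
      intro k
      cases k with
      | zero =>
        show (aut χ).δ none (σ 0) (some (vs 1, mkP χ vs 1))
        refine ⟨vs 0, hconsσ σ 0, ?_, ?_⟩
        · intro hmem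
          apply hns
          have hsfx0 : LTL.sfx σ 0 = σ := by funext j; exact congrArg σ (by omega)
          rw [← hsfx0]
          exact hmem
        · show mkP χ vs 1 = pend χ (vs 1)
          simp [mkP]
      | succ k =>
        show (aut χ).δ (some (vs (k+1), mkP χ vs (k+1))) (σ (k+1)) (some (vs (k+2), mkP χ vs (k+2)))
        refine ⟨hconsσ σ (k+1), ?_⟩
        simp only [mkP]
    have hfin := hacc r rfl hδ
    have hPsub : ∀ k, mkP χ vs (k+1) ⊆ pend χ (vs (k+1)) := by
      intro k
      simp only [mkP]
      split
      · exact subset_rfl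
      · exact Set.inter_subset_right
    have hPstep : ∀ k, mkP χ vs k ≠ ∅ →
        mkP χ vs (k+1) = mkP χ vs k ∩ pend χ (vs (k+1)) := by
      intro k hk
      simp only [mkP]
      rw [if_neg hk]
    have hinfP : ∀ K, ∃ k, K ≤ k ∧ mkP χ vs k = ∅ := by
      intro K
      by_contra hcon
      push_neg at hcon
      have hdec : ∀ d, mkP χ vs (K + d + 1) ⊆ mkP χ vs (K + d) := by
        intro d
        rw [hPstep (K+d) (hcon (K+d) (by omega)).ne_empty]
        exact Set.inter_subset_left
      obtain ⟨d₀, hd₀⟩ := Nat.sInf_mem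
        (⟨(mkP χ vs (K + 0)).ncard, 0, rfl⟩ : {m | ∃ d, (mkP χ vs (K + d)).ncard = m}.Nonempty)
      have hconst : ∀ d, d₀ ≤ d → mkP χ vs (K + d) = mkP χ vs (K + d₀) := by
        intro d hd
        induction d, hd using Nat.le_induction with
        | base => rfl
        | succ d hd ih =>
          have hsub : mkP χ vs (K + (d+1)) ⊆ mkP χ vs (K + d₀) := by
            rw [← ih, show K + (d+1) = K + d + 1 from by omega]
            exact hdec d
          apply Set.eq_of_subset_of_ncard_le hsub
          rw [hd₀]
          exact Nat.sInf_le ⟨d+1, rfl⟩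
      obtain ⟨u, hu⟩ := hcon (K+d₀) (by omega)
      have hupend : ∀ d, d₀ ≤ d → u ∈ pend χ (vs (K + d + 1)) := by
        intro d hd
        have hmem : u ∈ mkP χ vs (K + d + 1) := by
          rw [show K + d + 1 = K + (d+1) from by omega, hconst (d+1) (by omega)]
          exact hu
        exact hPsub (K + d) hmem
      obtain ⟨humem, φ, ψ₂, h2, hequ, hψnot⟩ := hupend d₀ le_rfl
      have husat : LTL.sat (LTL.sfx σ (K + d₀ + 1)) (LTL.untl φ ψ₂) := by
        have hm : LTL.sat (LTL.sfx σ (K + d₀ + 1)) u.1 := humem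
        rw [hequ] at hm
        exact hm
      have hψnever : ∀ d, d₀ ≤ d → ¬ LTL.sat (LTL.sfx σ (K + d + 1)) ψ₂ := by
        intro d hd
        obtain ⟨humem', φ', ψ', h2', hequ', hψnot'⟩ := hupend d hd
        rw [hequ] at hequ'
        injection hequ' with e1 e2
        subst e1; subst e2
        exact hψnot'
      obtain ⟨t, ht2, _⟩ := husat
      have heq : (fun j => LTL.sfx σ (K + d₀ + 1) (j + t)) = LTL.sfx σ (K + (d₀ + t) + 1) := by
        funext j; exact congrArg σ (by omega)
      rw [show LTL.sat (fun j => LTL.sfx σ (K + d₀ + 1) (j + t)) ψ₂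
            = LTL.sat (LTL.sfx σ (K + (d₀ + t) + 1)) ψ₂ from congrArg (fun τ => LTL.sat τ ψ₂) heq] at ht2
      exact hψnever (d₀ + t) (by omega) ht2
    obtain ⟨b, hb⟩ := hfin.bddAbove
    obtain ⟨k, hk, hkP⟩ := hinfP (b+1)
    have hkF : r k ∈ (aut χ).F := by
      cases k with
      | zero => omega
      | succ m =>
        refine ⟨vs (m+1), ?_⟩
        show some (vs (m+1), mkP χ vs (m+1)) = some (vs (m+1), ∅)
        rw [hkP]
    have := hb hkF
    omega
  · -- sat → accepts
    intro hsat r hr0 hδ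
    by_contra hnf
    have hinfF : ∀ K, ∃ k, K ≤ k ∧ r k ∈ (aut χ).F := by
      intro K
      by_contra hcon
      push_neg at hcon
      apply hnf
      refine Set.Finite.subset (Set.finite_Iio K) ?_
      intro k hk
      simp only [Set.mem_Iio]
      by_contra hlt
      exact hcon k (by omega) hk
    have hsome : ∀ k, ∃ vP : Set (SubfT χ) × Set (SubfT χ), r (k+1) = some vP := by
      intro k
      induction k with
      | zero =>
        have h0 := hδ 0
        rw [hr0] at h0
        cases h1 : r 1 with
        | none => rw [h1] at h0; exact absurd h0 (fun h => h)
        | some vP => exact ⟨vP, rfl⟩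
      | succ k ih =>
        obtain ⟨vP, hvP⟩ := ih
        obtain ⟨v1, P1⟩ := vP
        have h0 := hδ (k+1)
        rw [hvP] at h0
        cases h1 : r (k+2) with
        | none => rw [h1] at h0; exact absurd h0 (fun h => h)
        | some vP' => exact ⟨vP', rfl⟩
    choose vP hvP using hsome
    have hvPk : ∀ k, r (k+1) = some ((vP k).1, (vP k).2) := by
      intro k; rw [hvP k]
    have hstep : ∀ k, consA χ ((vP k).1) (σ (k+1)) ((vP (k+1)).1) ∧
        (vP (k+1)).2 = if (vP k).2 = ∅ then pend χ ((vP (k+1)).1)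
          else (vP k).2 ∩ pend χ ((vP (k+1)).1) := by
      intro k
      have h0 := hδ (k+1)
      rw [hvPk k, hvPk (k+1)] at h0
      exact h0
    have h0 := hδ 0
    rw [hr0, hvPk 0] at h0
    obtain ⟨v₀, hcons0, hχnot, hP0⟩ := h0
    have hbreak : ∀ K, ∃ k, K ≤ k ∧ (vP k).2 = ∅ := by
      intro K
      obtain ⟨k, hk, hkF⟩ := hinfF (K+1)
      obtain ⟨w, hw⟩ := hkF
      cases k with
      | zero => rw [hr0] at hw; cases hw
      | succ m =>
        rw [hvPk m] at hw
        injection hw with hw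
        refine ⟨m, by omega, ?_⟩
        have := congrArg Prod.snd hw
        simpa using this
    have hfair : ∀ φ ψ₂ (h : LTL.untl φ ψ₂ ∈ LTL.subf χ) (h2 : ψ₂ ∈ LTL.subf χ) (K : ℕ),
        ∃ k, K ≤ k ∧ ((⟨LTL.untl φ ψ₂, h⟩ : SubfT χ) ∈ (vP k).1 → ⟨ψ₂, h2⟩ ∈ (vP k).1) := by
      intro φ ψ₂ h h2 K
      by_contra hcon
      push_neg at hcon
      have hpend : ∀ k, K ≤ k → (⟨LTL.untl φ ψ₂, h⟩ : SubfT χ) ∈ pend χ ((vP k).1) := by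
        intro k hk
        obtain ⟨hin, hnot⟩ := hcon k hk
        exact ⟨hin, φ, ψ₂, h2, rfl, hnot⟩
      obtain ⟨k₀, hk₀, hk₀P⟩ := hbreak K
      have hstuck : ∀ d, (⟨LTL.untl φ ψ₂, h⟩ : SubfT χ) ∈ (vP (k₀ + d + 1)).2 := by
        intro d
        induction d with
        | zero =>
          rw [show k₀ + 0 + 1 = k₀ + 1 from by omega, (hstep k₀).2, if_pos hk₀P]
          exact hpend (k₀+1) (by omega)
        | succ d ih =>
          have hne : (vP (k₀ + d + 1)).2 ≠ ∅ := by
            intro he; rw [he] at ih; exact ih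
          rw [show k₀ + (d+1) + 1 = (k₀ + d + 1) + 1 from by omega, (hstep (k₀+d+1)).2, if_neg hne]
          exact ⟨ih, hpend (k₀ + d + 1 + 1) (by omega)⟩
      obtain ⟨k₁, hk₁, hk₁P⟩ := hbreak (k₀ + 1)
      have hmem : (⟨LTL.untl φ ψ₂, h⟩ : SubfT χ) ∈ (vP k₁).2 := by
        have := hstuck (k₁ - k₀ - 1)
        rwa [show k₀ + (k₁ - k₀ - 1) + 1 = k₁ from by omega] at this
      rw [hk₁P] at hmem
      exact hmem
    have hcons' : ∀ k, consA χ ((vP k).1) (LTL.sfx σ 1 k) ((vP (k+1)).1) := by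
      intro k
      exact (hstep k).1
    have heq := fair_run_eq (LTL.sfx σ 1) (fun k => (vP k).1) hcons' hfair
    have hv0 : (vP 0).1 = sv χ (LTL.sfx σ 1) := by
      ext ψ
      obtain ⟨ψ, hψ⟩ := ψ
      rw [heq ψ hψ 0]
      show LTL.sat (LTL.sfx (LTL.sfx σ 1) 0) ψ ↔ LTL.sat (LTL.sfx σ 1) ψ
      have e : LTL.sfx (LTL.sfx σ 1) 0 = LTL.sfx σ 1 := by funext j; exact congrArg σ (by omega)
      rw [e]
    rw [hv0] at hcons0
    have hveq : v₀ = sv χ σ := consA_unique hcons0 (consA_sv χ σ)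
    apply hχnot
    rw [hveq]
    exact hsat

end AutomatonDef


section UCBExistence

variable {V : Type}

lemma sat_foldl_conj (L : List (LTL V)) (b : LTL V) (σ : ℕ → Set V) :
    LTL.sat σ (L.foldl LTL.conj b) ↔ (LTL.sat σ b ∧ ∀ ξ ∈ L, LTL.sat σ ξ) := by
  induction L generalizing b with
  | nil => simp
  | cons x xs ih =>
    rw [List.foldl_cons, ih]
    constructor
    · rintro ⟨⟨hb, hx⟩, hxs⟩
      refine ⟨hb, ?_⟩
      intro ξ hξ
      rcases List.mem_cons.mp hξ with h | h
      · subst h; exact hx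
      · exact hxs ξ h
    · rintro ⟨hb, hall⟩
      exact ⟨⟨hb, hall x List.mem_cons_self⟩, fun ξ hξ => hall ξ (List.mem_cons_of_mem x hξ)⟩

lemma exists_ucb_list (l : List (LTL V)) :
    ∃ Aut : UCB V, ∀ σ, Aut.accepts σ ↔ ∀ ξ ∈ l, LTL.sat σ ξ := by
  cases l with
  | nil =>
    refine ⟨⟨PUnit, inferInstance, PUnit.unit, fun _ _ _ => True, ∅⟩, ?_⟩
    intro σ
    constructor
    · intro _ ξ h; exact absurd h List.not_mem_nil
    · intro _ r _ _
      convert Set.finite_empty using 1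
      ext k; exact iff_of_false (fun h => h) (fun h => h)
  | cons ξ₀ rest =>
    have hAut := aut_accepts_iff (rest.foldl LTL.conj ξ₀)
    set Aut := aut (rest.foldl LTL.conj ξ₀) with hA
    refine ⟨Aut, fun σ => (hAut σ).trans ?_⟩
    rw [sat_foldl_conj]
    constructor
    · rintro ⟨hb, hall⟩ ξ hξ
      rcases List.mem_cons.mp hξ with h | h
      · subst h; exact hb
      · exact hall ξ h
    · intro h
      exact ⟨h ξ₀ List.mem_cons_self, fun ξ hξ => h ξ (List.mem_cons_of_mem ξ₀ hξ)⟩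

lemma exists_ucb_decomp {n : ℕ} (A : Arch V n) (Φ : List (LTL V)) (i : Fin n) :
    ∃ Aut : UCB V, ∀ σ, Aut.accepts σ ↔ satDecomp A Φ i σ := by
  classical
  obtain ⟨Aut, hAut⟩ := exists_ucb_list (V := V)
    (Φ.filter (fun ξ => decide (inDecomp A Φ i ξ)))
  refine ⟨Aut, fun σ => (hAut σ).trans ?_⟩
  constructor
  · intro h ξ hξ
    refine h ξ (List.mem_filter.mpr ⟨hξ.1, ?_⟩)
    simp only [decide_eq_true_eq]
    exact hξ
  · intro h ξ hξ
    obtain ⟨h1, h2⟩ := List.mem_filter.mp hξ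
    exact h ξ (by simpa using h2)

end UCBExistence

section MooreHelpers

variable {V : Type}

lemma Moore.run_congr {I O : Set V} (m : Moore V I O) {γ γ' : ℕ → Set V} :
    ∀ {k : ℕ}, (∀ l, l < k → γ l ∩ I = γ' l ∩ I) → m.run γ k = m.run γ' k
  | 0, _ => rfl
  | k+1, h => by
    show m.trans (m.run γ k) (γ k ∩ I) = m.trans (m.run γ' k) (γ' k ∩ I)
    rw [Moore.run_congr m (fun l hl => h l (by omega)), h k (by omega)]

lemma PMoore.prun_congr {I O : Set V} (m : PMoore V I O) {γ γ' : ℕ → Set V} :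
    ∀ {k : ℕ}, (∀ l, l < k → γ l ∩ I = γ' l ∩ I) → m.prun γ k = m.prun γ' k
  | 0, _ => rfl
  | k+1, h => by
    show (m.prun γ k).bind _ = (m.prun γ' k).bind _
    rw [PMoore.prun_congr m (fun l hl => h l (by omega)), h k (by omega)]

lemma PMoore.prun_none_mono {I O : Set V} (m : PMoore V I O) {γ : ℕ → Set V} {k : ℕ}
    (h : m.prun γ k = none) : ∀ l, k ≤ l → m.prun γ l = none := by
  intro l hl
  induction l with
  | zero =>
    have : k = 0 := by omega
    subst this; exact h
  | succ l ih =>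
    rcases Nat.lt_succ_iff_lt_or_eq.mp (Nat.lt_succ_of_le hl) with h' | h'
    · have := ih (by omega)
      show (m.prun γ l).bind _ = none
      rw [this]; rfl
    · subst h'; exact h

lemma PSim.label_run {I O₁ O₂ : Set V} {T₂ : PMoore V I O₂} {T₁ : Moore V I O₁}
    (h : PSim T₂ T₁) (γ : ℕ → Set V) :
    ∀ k st, T₂.prun γ k = some st → T₂.label st ∩ O₁ = T₁.label (T₁.run γ k) := by
  obtain ⟨R, hinit, hlab, htr⟩ := h
  have key : ∀ k st, T₂.prun γ k = some st → R st (T₁.run γ k) := by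
    intro k
    induction k with
    | zero =>
      intro st hst
      have : st = T₂.init := by
        have : (some T₂.init : Option T₂.S) = some st := hst ▸ rfl
        exact (Option.some_injective _ this).symm
      subst this
      exact hinit
    | succ k ih =>
      intro st hst
      have hbind : (T₂.prun γ k).bind (fun s => T₂.trans s (γ k ∩ I)) = some st := hst
      obtain ⟨st', hst', htrans⟩ := Option.bind_eq_some_iff.mp hbind
      have := htr st' (T₁.run γ k) (γ k ∩ I) Set.inter_subset_right (ih st' hst') st htrans
      exact this
  intro k st hst
  exact hlab st _ (key k st hst)

end MooreHelpers


section ExtensionLemmas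

variable {V : Type} {n : ℕ}

lemma comp_inter_Og (A : Arch V n) (g : ∀ j, GTS A j) (j : Fin n) (τ : ℕ → Set V) (k : ℕ) :
    (g j).comp τ k ∩ A.Og j = (g j).label ((g j).run τ k) := by
  show ((τ k ∩ A.I j) ∪ (g j).label ((g j).run τ k)) ∩ A.Og j = _
  ext x
  constructor
  · rintro ⟨hx1 | hx2, hOg⟩
    · exact absurd hOg.1 (Set.disjoint_left.mp (A.disj_IO j) hx1.2)
    · exact hx2
  · intro hx
    exact ⟨Or.inr hx, (g j).label_sub _ hx⟩

lemma lab_eq (A : Arch V n) {i : Fin n} (g : ∀ j, GTS A j) (si : LocalStrategy A i)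
    (s' : Strategy A i) (hP : PSim si (g i)) (hexti : IsExtension A si (g i) s')
    (w : ℕ → Set V) (hw : ∀ k, w k ⊆ A.I i) (k : ℕ) :
    s'.label (s'.run w k) ∩ A.Og i = (g i).label ((g i).run w k) := by
  classical
  have hcomp : s'.comp w k = (w k ∩ A.I i) ∪ s'.label (s'.run w k) := rfl
  have hIOg : ∀ x, x ∈ A.I i → x ∉ A.Og i := fun x hI hOg =>
    Set.disjoint_left.mp (A.disj_IO i) hI hOg.1
  have hkill : ∀ L : Set V, ((w k ∩ A.I i) ∪ L) ∩ A.Og i = L ∩ A.Og i := by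
    intro L
    ext x
    constructor
    · rintro ⟨hx1 | hx2, hOg⟩
      · exact absurd hOg (hIOg x hx1.2)
      · exact ⟨hx2, hOg⟩
    · rintro ⟨h1, h2⟩
      exact ⟨Or.inr h1, h2⟩
  by_cases hInf : si.Inf w
  · have hc := (hexti w hw).1 hInf k
    obtain ⟨st, hst⟩ := Option.isSome_iff_exists.mp (hInf k)
    have hcD : si.compD w k = (w k ∩ A.I i) ∪ si.label st := by
      unfold PMoore.compD; rw [hst]
    have hl := PSim.label_run hP w k st hst
    rw [← hkill (s'.label (s'.run w k)), ← hcomp, hc, hcD, hkill, hl]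
  · obtain ⟨σ', hσ'sub, hσ'eq⟩ := (hexti w hw).2 hInf
    have hc := hσ'eq k
    rw [← hkill (s'.label (s'.run w k)), ← hcomp, hc]
    have hgc : (g i).comp w k = (w k ∩ A.I i) ∪ (g i).label ((g i).run w k) := rfl
    rw [hgc]
    ext x
    constructor
    · rintro ⟨(hx1 | hx2) | hx3, hOg⟩
      · exact absurd hOg (hIOg x hx1.2)
      · exact hx2
      · exact absurd hOg (hσ'sub k hx3).2
    · intro hx
      exact ⟨Or.inl (Or.inr hx), (g i).label_sub _ hx⟩

/-- States of all guarantee transition systems along the constructed witness word. -/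
noncomputable def mkSt (A : Arch V n) (g : ∀ j, GTS A j) (base : ℕ → Set V) (t₀ : ℕ)
    (i : Fin n) : (k : ℕ) → ∀ j, (g j).S
  | 0 => fun j => (g j).init
  | k+1 => fun j => (g j).trans (mkSt A g base t₀ i k j)
      ((if k < t₀ then base k
        else ⋃ j' ∈ {j' : Fin n | j' ≠ i}, (g j').label (mkSt A g base t₀ i k j')) ∩ A.I j)

/-- The constructed witness word. -/
noncomputable def mkW (A : Arch V n) (g : ∀ j, GTS A j) (base : ℕ → Set V) (t₀ : ℕ)
    (i : Fin n) (k : ℕ) : Set V :=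
  if k < t₀ then base k
  else ⋃ j' ∈ {j' : Fin n | j' ≠ i}, (g j').label (mkSt A g base t₀ i k j')

lemma run_mkW (A : Arch V n) (g : ∀ j, GTS A j) (base : ℕ → Set V) (t₀ : ℕ) (i : Fin n)
    (j : Fin n) : ∀ k, (g j).run (mkW A g base t₀ i) k = mkSt A g base t₀ i k j
  | 0 => rfl
  | k+1 => by
    show (g j).trans ((g j).run (mkW A g base t₀ i) k) (mkW A g base t₀ i k ∩ A.I j) = _
    rw [run_mkW A g base t₀ i j k]
    rfl

lemma inf_of_valid (A : Arch V n) {i : Fin n}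
    (g : ∀ j, GTS A j) (si : LocalStrategy A i) (s' : Strategy A i)
    (hP : PSim si (g i)) (hli : IsLocalStrategy A g {j | j ≠ i} si)
    (hexti : IsExtension A si (g i) s')
    (γ γ' : ℕ → Set V) (hγ : ∀ k, γ k ⊆ A.I i) (hγ' : ∀ k, γ' k ⊆ (A.Vars i)ᶜ)
    (hvalid : ∀ t, ValidHist A g {j | j ≠ i} t (cword A s' γ γ')) :
    si.Inf γ := by
  classical
  by_contra hInf
  have hex : ∃ k, si.prun γ k = none := by
    unfold PMoore.Inf at hInf
    push_neg at hInf
    obtain ⟨k, hk⟩ := hInf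
    exact ⟨k, Option.not_isSome_iff_eq_none.mp hk⟩
  set t₀ := Nat.find hex with ht₀
  have hdead : si.prun γ t₀ = none := Nat.find_spec hex
  have halive : ∀ l, l < t₀ → ∃ st, si.prun γ l = some st := by
    intro l hl
    have hne := Nat.find_min hex hl
    cases h : si.prun γ l with
    | none => exact absurd h hne
    | some st => exact ⟨st, rfl⟩
  obtain ⟨hcompInf, hcompFin⟩ := hexti γ hγ
  obtain ⟨σ', hσ'sub, hσ'eq⟩ := hcompFin hInf
  -- architecture facts
  have hIOd : ∀ (j : Fin n) x, x ∈ A.I j → x ∉ A.O j := fun j x hI hO =>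
    Set.disjoint_left.mp (A.disj_IO j) hI hO
  have hOdisj : ∀ (j j' : Fin n), j ≠ j' → ∀ x, x ∈ A.O j → x ∉ A.O j' :=
    fun j j' hne x h h' => Set.disjoint_left.mp (A.disj_O j j' hne) h h'
  have hIinp : ∀ (j : Fin n) x, x ∈ A.I j → x ∈ A.inp := fun j x h => Set.mem_iUnion.mpr ⟨j, h⟩
  have hOI_Og : ∀ x (j : Fin n), x ∈ A.O i → x ∈ A.I j → x ∈ A.Og i :=
    fun x j h1 h2 => ⟨h1, hIinp j x h2⟩
  have hg_labOg : ∀ (j : Fin n) st x, x ∈ (g j).label st → x ∈ A.Og j :=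
    fun j st x h => (g j).label_sub st h
  have hlabO : ∀ st x, x ∈ si.label st → x ∈ A.O i := fun st x h => si.label_sub st h
  have hγ'nV : ∀ l x, x ∈ γ' l → x ∉ A.Vars i := fun l x h => hγ' l h
  have hlab := PSim.label_run hP γ
  -- compD unfoldings
  have hcompD_some : ∀ (τ : ℕ → Set V) l st, si.prun τ l = some st →
      si.compD τ l = (τ l ∩ A.I i) ∪ si.label st := by
    intro τ l st h
    unfold PMoore.compD
    rw [h]
  have hcompD_none : ∀ (τ : ℕ → Set V) l, si.prun τ l = none →
      si.compD τ l = τ l ∩ A.I i := by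
    intro τ l h
    unfold PMoore.compD
    rw [h]
    exact Set.union_empty _
  -- the witness word
  set base : ℕ → Set V := fun k => si.compD γ k ∪ γ' k with hbase
  set W : ℕ → Set V := mkW A g base t₀ i with hWdef
  have hW_lt : ∀ k, k < t₀ → W k = si.compD γ k ∪ γ' k := by
    intro k hk
    show mkW A g base t₀ i k = _
    unfold mkW
    rw [if_pos hk]
  have hW_ge : ∀ k, ¬ k < t₀ →
      W k = ⋃ j' ∈ {j' : Fin n | j' ≠ i}, (g j').label (mkSt A g base t₀ i k j') := by
    intro k hk
    show mkW A g base t₀ i k = _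
    unfold mkW
    rw [if_neg hk]
  have hrunW : ∀ (j : Fin n) k, (g j).run W k = mkSt A g base t₀ i k j :=
    fun j k => run_mkW A g base t₀ i j k
  set γt : ℕ → Set V := fun k => W k ∩ A.I i with hγtdef
  set γt' : ℕ → Set V := fun k => W k \ A.Vars i with hγt'def
  have hγtsub : ∀ k, γt k ⊆ A.I i := fun k => Set.inter_subset_right
  have hγt'sub : ∀ k, γt' k ⊆ (A.Vars i)ᶜ := fun k x hx => hx.2
  -- the new input agrees with γ before the death point
  have hF5 : ∀ l, l < t₀ → γt l ∩ A.I i = γ l ∩ A.I i := by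
    intro l hl
    obtain ⟨st, hst⟩ := halive l hl
    show (W l ∩ A.I i) ∩ A.I i = γ l ∩ A.I i
    rw [Set.inter_assoc, Set.inter_self, hW_lt l hl, hcompD_some γ l st hst]
    ext x
    constructor
    · rintro ⟨(hx1 | hx2) | hx3, hI⟩
      · exact hx1
      · exact absurd (hlabO st x hx2) (hIOd i x hI)
      · exact absurd (Or.inl hI) (hγ'nV l x hx3)
    · rintro ⟨h1, h2⟩
      exact ⟨Or.inl (Or.inl ⟨h1, h2⟩), h2⟩
  have hprun_eq : ∀ l, l ≤ t₀ → si.prun γt l = si.prun γ l := by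
    intro l hl
    exact PMoore.prun_congr si (fun l' hl' => hF5 l' (by omega))
  have hdead_t : si.prun γt t₀ = none := by
    rw [hprun_eq t₀ le_rfl]
    exact hdead
  have hInfγt : ¬ si.Inf γt := by
    intro h
    have := h t₀
    rw [hdead_t] at this
    simp at this
  -- the constructed word decomposes as required by the local-strategy property
  have hcompDt : ∀ k, si.compD γt k ∪ γt' k = W k := by
    intro k
    by_cases hk : k < t₀
    · obtain ⟨st, hst⟩ := halive k hk
      have hstt : si.prun γt k = some st := by
        rw [hprun_eq k (le_of_lt hk)]
        exact hst
      have h2 : γt' k = γ' k := by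
        show W k \ A.Vars i = γ' k
        rw [hW_lt k hk, hcompD_some γ k st hst]
        ext x
        constructor
        · rintro ⟨(hx1 | hx2) | hx3, hnv⟩
          · exact absurd (Or.inl hx1.2) hnv
          · exact absurd (Or.inr (hlabO st x hx2)) hnv
          · exact hx3
        · intro hx
          exact ⟨Or.inr hx, hγ'nV k x hx⟩
      rw [hcompD_some γt k st hstt, h2, hW_lt k hk, hcompD_some γ k st hst, hF5 k hk]
    · have hnone : si.prun γt k = none :=
        PMoore.prun_none_mono si hdead_t k (by omega)
      rw [hcompD_none γt k hnone]
      show ((W k ∩ A.I i) ∩ A.I i) ∪ (W k \ A.Vars i) = W k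
      rw [Set.inter_assoc, Set.inter_self]
      ext x
      constructor
      · rintro (⟨h1, _⟩ | ⟨h1, _⟩) <;> exact h1
      · intro hx
        by_cases hv : x ∈ A.Vars i
        · left
          refine ⟨hx, ?_⟩
          have hx' := hx
          rw [hW_ge k hk] at hx'
          simp only [Set.mem_iUnion] at hx'
          obtain ⟨j', hj', hxl⟩ := hx'
          have hxO : x ∈ A.O j' := (hg_labOg j' _ x hxl).1
          rcases hv with hvI | hvO
          · exact hvI
          · exact absurd hvO (hOdisj j' i hj' x hxO)
        · right
          exact ⟨hx, hv⟩
  -- the invariant: the word carries exactly the guarantee outputs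
  have hInv : ∀ (j : Fin n), j ≠ i → ∀ k, W k ∩ A.Og j = (g j).label ((g j).run W k) := by
    intro j hj k
    have hWo_lab : ∀ kk, cword A s' γ γ' kk ∩ A.Og j
        = (g j).label ((g j).run (cword A s' γ γ') kk) := by
      intro kk
      have hv := hvalid (kk+1) j hj kk (Nat.lt_succ_self kk) (cword A s' γ γ') (fun l _ => rfl)
      rw [hv, comp_inter_Og A g j]
    by_cases hk : k < t₀
    · -- transfer from the original word using validity
      have hWI : ∀ l, l < t₀ → W l ∩ A.I j = cword A s' γ γ' l ∩ A.I j := by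
        intro l hl
        obtain ⟨st, hst⟩ := halive l hl
        have hle := hlab l st hst
        have hcw : cword A s' γ γ' l = (((γ l ∩ A.I i) ∪ (g i).label ((g i).run γ l)) ∪ σ' l) ∪ γ' l := by
          show s'.comp γ l ∪ γ' l = _
          rw [hσ'eq l]
          rfl
        rw [hW_lt l hl, hcompD_some γ l st hst, hcw]
        ext x
        constructor
        · rintro ⟨(hx1 | hx2) | hx3, hI⟩
          · exact ⟨Or.inl (Or.inl (Or.inl hx1)), hI⟩
          · have hOg : x ∈ A.Og i := hOI_Og x j (hlabO st x hx2) hI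
            have : x ∈ (g i).label ((g i).run γ l) := hle ▸ (⟨hx2, hOg⟩ : x ∈ si.label st ∩ A.Og i)
            exact ⟨Or.inl (Or.inl (Or.inr this)), hI⟩
          · exact ⟨Or.inr hx3, hI⟩
        · rintro ⟨((hx1 | hx2) | hx3) | hx4, hI⟩
          · exact ⟨Or.inl (Or.inl hx1), hI⟩
          · have : x ∈ si.label st ∩ A.Og i := hle.symm ▸ hx2
            exact ⟨Or.inl (Or.inr this.1), hI⟩
          · have hOg : x ∈ A.Og i := hOI_Og x j (hσ'sub l hx3).1 hI
            exact absurd hOg (hσ'sub l hx3).2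
          · exact ⟨Or.inr hx4, hI⟩
      have hWOg : W k ∩ A.Og j = cword A s' γ γ' k ∩ A.Og j := by
        obtain ⟨st, hst⟩ := halive k hk
        have hcw : cword A s' γ γ' k = (((γ k ∩ A.I i) ∪ (g i).label ((g i).run γ k)) ∪ σ' k) ∪ γ' k := by
          show s'.comp γ k ∪ γ' k = _
          rw [hσ'eq k]
          rfl
        have hine : i ≠ j := fun h => hj h.symm
        rw [hW_lt k hk, hcompD_some γ k st hst, hcw]
        ext x
        constructor
        · rintro ⟨(hx1 | hx2) | hx3, hOg⟩
          · exact ⟨Or.inl (Or.inl (Or.inl hx1)), hOg⟩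
          · exact absurd hOg.1 (hOdisj i j hine x (hlabO st x hx2))
          · exact ⟨Or.inr hx3, hOg⟩
        · rintro ⟨((hx1 | hx2) | hx3) | hx4, hOg⟩
          · exact ⟨Or.inl (Or.inl hx1), hOg⟩
          · exact absurd hOg.1 (hOdisj i j hine x (hg_labOg i _ x hx2).1)
          · exact absurd hOg.1 (hOdisj i j hine x (hσ'sub k hx3).1)
          · exact ⟨Or.inr hx4, hOg⟩
      have hrun_eq : (g j).run W k = (g j).run (cword A s' γ γ') k :=
        Moore.run_congr (g j) (fun l hl => hWI l (by omega))
      rw [hWOg, hWo_lab k, hrun_eq]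
    · rw [hW_ge k hk, hrunW j k]
      ext x
      constructor
      · rintro ⟨hx1, hxOg⟩
        simp only [Set.mem_iUnion] at hx1
        obtain ⟨j', hj', hxl⟩ := hx1
        by_cases hjj : j' = j
        · subst hjj
          exact hxl
        · exact absurd hxOg.1 (hOdisj j' j hjj x (hg_labOg j' _ x hxl).1)
      · intro hxl
        refine ⟨?_, hg_labOg j _ x hxl⟩
        simp only [Set.mem_iUnion]
        exact ⟨j, hj, hxl⟩
  -- validity of the constructed word
  have hvalidW : ∀ t, ValidHist A g {j | j ≠ i} t (fun k => si.compD γt k ∪ γt' k) := by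
    intro t j hj k hk σh hagree
    show (PMoore.compD si γt k ∪ γt' k) ∩ A.Og j = Moore.comp (g j) σh k ∩ A.Og j
    rw [hcompDt k]
    have hcg : (g j).comp σh k ∩ A.Og j = (g j).label ((g j).run σh k) :=
      comp_inter_Og A g j σh k
    rw [hcg]
    have hrs : (g j).run σh k = (g j).run W k := by
      apply Moore.run_congr
      intro l hl
      rw [hagree l (by omega)]
      show (PMoore.compD si γt l ∪ γt' l) ∩ A.I j = W l ∩ A.I j
      rw [hcompDt l]
    rw [hrs]
    exact hInv j hj k
  exact hInfγt ((hli γt hγtsub).mpr ⟨γt', hγt'sub, hvalidW⟩)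

end ExtensionLemmas


/-- **Extension of local-strategy solutions to complete solutions.** If `(S,G)` is a
solution of certifying synthesis with local strategies for `φ`, then `(S',G)` is a
solution of certifying synthesis with local satisfaction for `φ`, where `s'ᵢ` is the
extension of the local strategy `sᵢ` w.r.t. `G`. -/
theorem local_solution_extends_to_complete_solution
    {V : Type} [Finite V] {n : ℕ} (A : Arch V n) (Φ : List (LTL V))
    (g : ∀ i, GTS A i) (s : ∀ i, LocalStrategy A i)
    (hloc : ∀ i, IsLocalStrategy A g {j | j ≠ i} (s i))
    (hsol : CertSolLocal A Φ s g)
    (s' : ∀ i, Strategy A i)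
    (hext : ∀ i, IsExtension A (s i) (g i) (s' i)) :
    CertSolGTS A Φ s' g := by
  intro i
  obtain ⟨hPi, hRuns⟩ := hsol i
  constructor
  · -- simulation of the extension by the guarantee
    refine ⟨fun t₂ t₁ => ∃ m : ℕ, ∃ w : ℕ → Set V,
      (∀ k, w k ⊆ A.I i) ∧ (s' i).run w m = t₂ ∧ (g i).run w m = t₁, ?_, ?_, ?_⟩
    · exact ⟨0, fun _ => ∅, fun _ => Set.empty_subset _, rfl, rfl⟩
    · rintro t₂ t₁ ⟨m, w, hw, rfl, rfl⟩
      exact lab_eq A g (s i) (s' i) hPi (hext i) w hw m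
    · rintro t₂ t₁ a ha ⟨m, w, hw, rfl, rfl⟩
      refine ⟨m+1, fun k => if k = m then a else w k, ?_, ?_, ?_⟩
      · intro k
        dsimp only
        split
        · exact ha
        · exact hw k
      · show (s' i).trans ((s' i).run (fun k => if k = m then a else w k) m)
            ((if m = m then a else w m) ∩ A.I i) = (s' i).trans ((s' i).run w m) a
        rw [Moore.run_congr (s' i) (γ' := w) (fun l hl => by rw [if_neg (by omega)]),
          if_pos rfl, Set.inter_eq_self_of_subset_left ha]
      · show (g i).trans ((g i).run (fun k => if k = m then a else w k) m)
            ((if m = m then a else w m) ∩ A.I i) = (g i).trans ((g i).run w m) a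
        rw [Moore.run_congr (g i) (γ' := w) (fun l hl => by rw [if_neg (by omega)]),
          if_pos rfl, Set.inter_eq_self_of_subset_left ha]
  · -- local satisfaction
    intro γ γ' hγ hγ' hvalid
    have hInf : (s i).Inf γ :=
      inf_of_valid A g (s i) (s' i) hPi (hloc i) (hext i) γ γ' hγ hγ' hvalid
    obtain ⟨AutE, hAutE⟩ := exists_ucb_decomp A Φ i
    have hro := hRuns AutE hAutE γ γ' hγ hγ'
    have hword : cword A (s' i) γ γ' = fun k => (s i).compD γ k ∪ γ' k := by
      funext k
      show (s' i).comp γ k ∪ γ' k = _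
      rw [((hext i) γ hγ).1 hInf k]
    rw [hword]
    have hacc : AutE.accepts (fun k => (s i).compD γ k ∪ γ' k) := by
      intro r hr0 hδ
      have h2 : ∀ k a, (s i).pcomp γ γ' k = some a → AutE.δ (r k) a (r (k+1)) := by
        intro k a ha
        obtain ⟨st, hst⟩ := Option.isSome_iff_exists.mp (hInf k)
        have hpc : (s i).pcomp γ γ' k
            = some ((γ k ∩ A.I i) ∪ (s i).label st ∪ γ' k) := by
          unfold PMoore.pcomp
          rw [hst]
          rfl
        rw [hpc] at ha
        have hXa : (γ k ∩ A.I i) ∪ (s i).label st ∪ γ' k = a := Option.some_injective _ ha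
        have hcomp : (s i).compD γ k ∪ γ' k = (γ k ∩ A.I i) ∪ (s i).label st ∪ γ' k := by
          unfold PMoore.compD
          rw [hst]
        rw [← hXa, ← hcomp]
        exact hδ k
      have hfin := hro r hr0 h2
      refine Set.Finite.subset hfin ?_
      intro k hk
      refine ⟨hk, ?_⟩
      intro l _
      obtain ⟨st, hst⟩ := Option.isSome_iff_exists.mp (hInf l)
      show ((s i).pcomp γ γ' l).isSome
      unfold PMoore.pcomp
      rw [hst]
      rfl
    exact (hAutE _).mp hacc

end CertSynth
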